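/- Let $l_1,l_2,l_3 \to \infty$ with $l_1+l_2-l_3 \to \infty$. Then $\operatorname{arccosh}\left(\frac{\cosh(l_3/2) + \cosh(l_1/2)\cosh(l_2/2)}{\sinh(l_1/2)\sinh(l_2/2)}\right) \to 0$, i.e. the perpendicular distance between the boundary components of lengths $l_1$ and $l_2$ of a hyperbolic pair of pants tends to zero when $l_1+l_2-l_3 \to \infty$. -/

import Mathlib

open Filter

noncomputable def arcosh (x : ℝ) : ℝ := Real.log (x + Real.sqrt (x ^ 2 - 1))

noncomputable def pantsPerp (l1 l2 l3 : ℝ) : ℝ :=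
  arcosh ((Real.cosh (l3 / 2) + Real.cosh (l1 / 2) * Real.cosh (l2 / 2)) /
    (Real.sinh (l1 / 2) * Real.sinh (l2 / 2)))

/-!
With `a, b, c` the half lengths, the argument of `arcosh` is
`cosh c / (sinh a * sinh b) + coth a * coth b`. Since `cosh x` and `sinh x` are both
asymptotic to `exp x / 2`, the first term behaves like `2 * exp (c - a - b) → 0` and the second
tends to `1`; finally `arcosh` is continuous at `1`, where it vanishes.
-/

open Real hiding arcosh
open scoped Topology

lemma tendsto_arcosh_nhds_one : Tendsto arcosh (𝓝 1) (𝓝 0) := by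
  have : ContinuousAt arcosh 1 := by unfold arcosh; fun_prop (disch := norm_num)
  simpa [arcosh] using this.tendsto

lemma tendsto_exp_neg_div_exp_atTop : Tendsto (fun x => exp (-x) / exp x) atTop (𝓝 0) :=
  tendsto_exp_neg_atTop_nhds_zero.div_atTop tendsto_exp_atTop

lemma tendsto_cosh_div_exp_atTop : Tendsto (fun x => cosh x / exp x) atTop (𝓝 (1 / 2)) := by
  have h := (tendsto_exp_neg_div_exp_atTop.const_add 1).div_const 2
  rw [add_zero] at h
  refine h.congr fun x => ?_
  rw [cosh_eq]
  field_simp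

lemma tendsto_sinh_div_exp_atTop : Tendsto (fun x => sinh x / exp x) atTop (𝓝 (1 / 2)) := by
  have h := (tendsto_exp_neg_div_exp_atTop.const_sub 1).div_const 2
  rw [sub_zero] at h
  refine h.congr fun x => ?_
  rw [sinh_eq]
  field_simp

lemma tendsto_cosh_div_sinh_atTop : Tendsto (fun x => cosh x / sinh x) atTop (𝓝 1) := by
  have h := tendsto_cosh_div_exp_atTop.div tendsto_sinh_div_exp_atTop (by norm_num)
  rw [div_self (by norm_num)] at h
  exact h.congr fun x => div_div_div_cancel_right₀ (exp_pos x).ne' _ _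

section

variable {α : Type*} {l : Filter α} {a b c : α → ℝ}

lemma tendsto_cosh_div_sinh_mul_sinh (ha : Tendsto a l atTop) (hb : Tendsto b l atTop)
    (hc : Tendsto c l atTop) (habc : Tendsto (fun t => a t + b t - c t) l atTop) :
    Tendsto (fun t => cosh (c t) / (sinh (a t) * sinh (b t))) l (𝓝 0) := by
  have hsinh := (tendsto_sinh_div_exp_atTop.comp ha).mul (tendsto_sinh_div_exp_atTop.comp hb)
  have hexp := tendsto_exp_atBot.comp (tendsto_neg_atTop_atBot.comp habc)
  have h := ((tendsto_cosh_div_exp_atTop.comp hc).mul hexp).div hsinh (by norm_num)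
  rw [mul_zero, zero_div] at h
  refine h.congr' ?_
  filter_upwards [ha.eventually_gt_atTop 0, hb.eventually_gt_atTop 0] with t hat hbt
  have hsa := (sinh_pos_iff.mpr hat).ne'
  have hsb := (sinh_pos_iff.mpr hbt).ne'
  simp only [Pi.div_apply, Function.comp_apply, neg_sub, exp_sub, exp_add]
  field_simp

lemma tendsto_cosh_add_cosh_mul_cosh_div_sinh_mul_sinh (ha : Tendsto a l atTop)
    (hb : Tendsto b l atTop) (hc : Tendsto c l atTop)
    (habc : Tendsto (fun t => a t + b t - c t) l atTop) :
    Tendsto (fun t => (cosh (c t) + cosh (a t) * cosh (b t)) / (sinh (a t) * sinh (b t))) l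
      (𝓝 1) := by
  have h := (tendsto_cosh_div_sinh_mul_sinh ha hb hc habc).add
    ((tendsto_cosh_div_sinh_atTop.comp ha).mul (tendsto_cosh_div_sinh_atTop.comp hb))
  rw [zero_add, one_mul] at h
  exact h.congr fun t => by simp only [Function.comp_apply, add_div, mul_div_mul_comm]

end

theorem pantsPerp_tendsto_zero_general (l1 l2 l3 : ℝ → ℝ)
    (h1 : Tendsto l1 atTop atTop) (h2 : Tendsto l2 atTop atTop)
    (h3 : Tendsto l3 atTop atTop)
    (hdiff : Tendsto (fun t => l1 t + l2 t - l3 t) atTop atTop) :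
    Tendsto (fun t => pantsPerp (l1 t) (l2 t) (l3 t)) atTop (nhds 0) := by
  have hdiff' : Tendsto (fun t => l1 t / 2 + l2 t / 2 - l3 t / 2) atTop atTop :=
    (hdiff.atTop_div_const two_pos).congr fun t => by ring
  exact tendsto_arcosh_nhds_one.comp <| tendsto_cosh_add_cosh_mul_cosh_div_sinh_mul_sinh
    (h1.atTop_div_const two_pos) (h2.atTop_div_const two_pos) (h3.atTop_div_const two_pos) hdiff'

/-- If `l1, l2, l3 → ∞` and `l1 + l2 - l3 → ∞`, the perpendicular distance between
the boundary components of lengths `l1` and `l2` of a hyperbolic pair of pants with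
boundary lengths `l1, l2, l3` tends to zero. -/
theorem pantsPerp_tendsto_zero (l1 l2 l3 : ℝ → ℝ)
    (hpos : ∀ t, 0 < l1 t ∧ 0 < l2 t ∧ 0 < l3 t)
    (h1 : Tendsto l1 atTop atTop) (h2 : Tendsto l2 atTop atTop)
    (h3 : Tendsto l3 atTop atTop)
    (hdiff : Tendsto (fun t => l1 t + l2 t - l3 t) atTop atTop) :
    Tendsto (fun t => pantsPerp (l1 t) (l2 t) (l3 t)) atTop (nhds 0) :=
  pantsPerp_tendsto_zero_general l1 l2 l3 h1 h2 h3 hdiff
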